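/- arXiv:2106.15162 — 3 statements merged into one kernel-verified Lean document; each statement's English description precedes it below -/
import Mathlib

section
/- Let p_c(z) = z^n + c\,\overline{z}^k - 1 where c is a positive real number, n \ge 3, 1 \le k \le n-1, and \gcd(n,k) = 1. Let M = \max(1, c), let r be a positive real root with r \neq 1 of the equation x^{n+1} - (1+M)x^n + M = 0, and let R = \max(1, r). Then every zero z of p_c satisfies |z| \le R. -/
open Complex Finset

/-!
Suppose `t = ‖z‖ > max 1 r`. The triangle inequality and `k ≤ n - 1` give
`t ^ n ≤ 1 + M t ^ (n - 1) ≤ M (1 + t + ⋯ + t ^ (n - 1))`. Dividing the root equation by `r - 1`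
gives `r ^ n = M (1 + r + ⋯ + r ^ (n - 1))`, and since `x ↦ M ∑_{j=1}^{n} x⁻ʲ` is strictly
decreasing, `M (1 + t + ⋯ + t ^ (n - 1)) < t ^ n` for every `t > r`, a contradiction.
-/

def harmonicTrinomial (n k : ℕ) (c z : ℂ) : ℂ :=
  z ^ n + c * starRingEnd ℂ z ^ k - 1

theorem norm_pow_le_of_harmonicTrinomial_eq_zero {n k : ℕ} {c z : ℂ}
    (hz : harmonicTrinomial n k c z = 0) : ‖z‖ ^ n ≤ 1 + ‖c‖ * ‖z‖ ^ k := by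
  have hzn : z ^ n = 1 - c * starRingEnd ℂ z ^ k := by
    unfold harmonicTrinomial at hz
    linear_combination hz
  calc ‖z‖ ^ n = ‖1 - c * starRingEnd ℂ z ^ k‖ := by rw [← norm_pow, hzn]
    _ ≤ ‖(1 : ℂ)‖ + ‖c * starRingEnd ℂ z ^ k‖ := norm_sub_le _ _
    _ = 1 + ‖c‖ * ‖z‖ ^ k := by rw [norm_one, norm_mul, norm_pow, norm_conj]

theorem one_add_pow_pred_le_geom_sum {t : ℝ} (ht : 0 ≤ t) {n : ℕ} (hn : 2 ≤ n) :
    1 + t ^ (n - 1) ≤ ∑ i ∈ range n, t ^ i := by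
  have hsub : ({0, n - 1} : Finset ℕ) ⊆ range n := by
    intro i hi
    rw [mem_insert, mem_singleton] at hi
    rw [mem_range]
    omega
  have hle := sum_le_sum_of_subset_of_nonneg hsub fun i _ _ => pow_nonneg ht i
  rwa [sum_pair (by omega), pow_zero] at hle

theorem one_add_mul_pow_le_mul_geom_sum {t c M : ℝ} {n k : ℕ} (ht : 1 ≤ t) (hn : 2 ≤ n)
    (hk : k ≤ n - 1) (hcM : c ≤ M) (hM : 1 ≤ M) :
    1 + c * t ^ k ≤ M * ∑ i ∈ range n, t ^ i := by
  have hpow : c * t ^ k ≤ M * t ^ (n - 1) :=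
    mul_le_mul hcM (pow_le_pow_right₀ ht hk) (by positivity) (by linarith)
  calc 1 + c * t ^ k ≤ M * (1 + t ^ (n - 1)) := by linarith
    _ ≤ M * ∑ i ∈ range n, t ^ i :=
      mul_le_mul_of_nonneg_left (one_add_pow_pred_le_geom_sum (by linarith) hn) (by linarith)

theorem pow_eq_mul_geom_sum_of_root {α : Type*} [CommRing α] [IsDomain α] {r M : α} {n : ℕ}
    (hr : r ≠ 1) (hroot : r ^ (n + 1) - (1 + M) * r ^ n + M = 0) :
    r ^ n = M * ∑ i ∈ range n, r ^ i := by
  have hfactor : (r - 1) * (r ^ n - M * ∑ i ∈ range n, r ^ i) = 0 := by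
    linear_combination hroot - M * geom_sum_mul r n
  rw [← sub_eq_zero]
  exact (mul_eq_zero.mp hfactor).resolve_left (sub_ne_zero.mpr hr)

theorem geom_sum_mul_pow_lt {r t : ℝ} (hr : 0 < r) (hrt : r < t) {n : ℕ} (hn : 0 < n) :
    (∑ i ∈ range n, t ^ i) * r ^ n < (∑ i ∈ range n, r ^ i) * t ^ n := by
  rw [sum_mul, sum_mul]
  refine sum_lt_sum_of_nonempty (nonempty_range_iff.mpr hn.ne') fun i hi => ?_
  have hin : i < n := mem_range.mp hi
  have hsplit : i + (n - i) = n := by omega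
  have hlt : r ^ (n - i) < t ^ (n - i) := pow_lt_pow_left₀ hrt hr.le (by omega)
  calc t ^ i * r ^ n = t ^ i * r ^ i * r ^ (n - i) := by rw [mul_assoc, ← pow_add, hsplit]
    _ < t ^ i * r ^ i * t ^ (n - i) :=
      mul_lt_mul_of_pos_left hlt (mul_pos (pow_pos (hr.trans hrt) i) (pow_pos hr i))
    _ = r ^ i * t ^ n := by rw [mul_comm (t ^ i), mul_assoc, ← pow_add, hsplit]

theorem mul_geom_sum_lt_pow_of_lt {r t M : ℝ} {n : ℕ} (hr : 0 < r) (hrt : r < t) (hn : 0 < n)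
    (hM : 0 < M) (hroot : r ^ n = M * ∑ i ∈ range n, r ^ i) :
    M * ∑ i ∈ range n, t ^ i < t ^ n := by
  have hrn : 0 < r ^ n := pow_pos hr n
  refine lt_of_mul_lt_mul_right ?_ hrn.le
  calc M * (∑ i ∈ range n, t ^ i) * r ^ n = M * ((∑ i ∈ range n, t ^ i) * r ^ n) := by ring
    _ < M * ((∑ i ∈ range n, r ^ i) * t ^ n) :=
      mul_lt_mul_of_pos_left (geom_sum_mul_pow_lt hr hrt hn) hM
    _ = t ^ n * r ^ n := by rw [← mul_assoc, ← hroot, mul_comm]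

theorem harmonic_trinomial_zeros_in_closed_disk_general
    (n k : ℕ) (hn : 3 ≤ n) (hkn : k ≤ n - 1)
    (c : ℝ) (hc : 0 < c)
    (M : ℝ) (hM : M = max 1 c)
    (r : ℝ) (hr : 0 < r) (hr1 : r ≠ 1)
    (hroot : r ^ (n + 1) - (1 + M) * r ^ n + M = 0)
    (R : ℝ) (hR : R = max 1 r)
    (z : ℂ) (hz : z ^ n + (c : ℂ) * (starRingEnd ℂ) z ^ k - 1 = 0) :
    ‖z‖ ≤ R := by
  subst hR
  by_contra! hlt
  have hM1 : 1 ≤ M := hM ▸ le_max_left 1 c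
  have hcM : c ≤ M := hM ▸ le_max_right 1 c
  have ht1 : 1 < ‖z‖ := (le_max_left 1 r).trans_lt hlt
  have hrt : r < ‖z‖ := (le_max_right 1 r).trans_lt hlt
  have hupper : ‖z‖ ^ n ≤ M * ∑ i ∈ range n, ‖z‖ ^ i :=
    calc ‖z‖ ^ n ≤ 1 + ‖(c : ℂ)‖ * ‖z‖ ^ k := norm_pow_le_of_harmonicTrinomial_eq_zero hz
      _ = 1 + c * ‖z‖ ^ k := by rw [norm_real, Real.norm_of_nonneg hc.le]
      _ ≤ M * ∑ i ∈ range n, ‖z‖ ^ i :=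
        one_add_mul_pow_le_mul_geom_sum ht1.le (by omega) hkn hcM hM1
  have hlower : M * ∑ i ∈ range n, ‖z‖ ^ i < ‖z‖ ^ n :=
    mul_geom_sum_lt_pow_of_lt hr hrt (by omega) (by linarith)
      (pow_eq_mul_geom_sum_of_root hr1 hroot)
  exact hupper.not_gt hlower

/-- Every zero of `p_c(z) = z^n + c ẑ^k - 1` (with `c > 0` real, `n ≥ 3`,
`1 ≤ k ≤ n-1`, `gcd(n,k)=1`) satisfies `|z| ≤ R = max 1 r`, where `r ≠ 1` is a
positive real root of `x^(n+1) - (1+M) x^n + M = 0` with `M = max 1 c`. -/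
theorem harmonic_trinomial_zeros_in_closed_disk
    (n k : ℕ) (hn : 3 ≤ n) (hk1 : 1 ≤ k) (hkn : k ≤ n - 1)
    (hgcd : Nat.gcd n k = 1)
    (c : ℝ) (hc : 0 < c)
    (M : ℝ) (hM : M = max 1 c)
    (r : ℝ) (hr : 0 < r) (hr1 : r ≠ 1)
    (hroot : r ^ (n + 1) - (1 + M) * r ^ n + M = 0)
    (R : ℝ) (hR : R = max 1 r)
    (z : ℂ) (hz : z ^ n + (c : ℂ) * (starRingEnd ℂ) z ^ k - 1 = 0) :
    ‖z‖ ≤ R :=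
  harmonic_trinomial_zeros_in_closed_disk_general n k hn hkn c hc M hM r hr hr1 hroot R hR z hz
end

section
/- Let p_c(z) = z^n + c\,\overline{z}^k - 1 where 0 < c < 1 is real, n \ge 3, 1 \le k \le n-1, and \gcd(n,k) = 1. Then every zero z of p_c satisfies (1-c)^{1/(n-k)} < |z| < (1+c)^{1/(n-k)}. -/
/-!
Put `r = ‖z‖` and `m = n - k`. Taking norms in `z ^ n = 1 - c z̄ ^ k` gives
`r ^ n ≤ 1 + c r ^ k` and `1 ≤ r ^ n + c r ^ k`. Since `r ^ n = r ^ k r ^ m`, the bound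
`r ^ m ≥ 1 + c` would force `r ^ k ≤ 1`, hence `r ^ m ≤ 1`; and `r ^ m ≤ 1 - c` would force
`r ^ k ≥ 1`, hence `r ^ m ≥ 1`. So `1 - c < r ^ m < 1 + c`.
-/

open Complex

section PowBounds

variable {r c : ℝ} {k m : ℕ}

lemma one_sub_lt_pow_of_one_le_pow_add_mul_pow (hr : 0 ≤ r) (hk : k ≠ 0) (hc : 0 < c)
    (h : 1 ≤ r ^ (k + m) + c * r ^ k) : 1 - c < r ^ m := by
  by_contra! hrm
  have hrk : 1 ≤ r ^ k := by
    calc 1 ≤ r ^ k * (r ^ m + c) := by linarith [pow_add r k m]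
      _ ≤ r ^ k * 1 := by gcongr; linarith
      _ = r ^ k := mul_one _
  have hr1 : 1 ≤ r := (one_le_pow_iff_of_nonneg hr hk).mp hrk
  linarith [one_le_pow₀ (n := m) hr1]

lemma pow_lt_one_add_of_pow_add_le_one_add_mul_pow (hr : 0 ≤ r) (hk : k ≠ 0) (hc : 0 < c)
    (h : r ^ (k + m) ≤ 1 + c * r ^ k) : r ^ m < 1 + c := by
  by_contra! hrm
  have hrk : r ^ k ≤ 1 := by
    have : r ^ k * (1 + c) ≤ r ^ k * r ^ m := by gcongr
    rw [← pow_add] at this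
    linarith
  have hr1 : r ≤ 1 := (pow_le_one_iff_of_nonneg hr hk).mp hrk
  linarith [pow_le_one₀ (n := m) hr hr1]

end PowBounds

lemma norm_pow_bounds_of_pow_add_mul_conj_pow_eq_one {n k : ℕ} {c : ℝ} (hc : 0 ≤ c) {z : ℂ}
    (h : z ^ n + c * (starRingEnd ℂ) z ^ k = 1) :
    ‖z‖ ^ n ≤ 1 + c * ‖z‖ ^ k ∧ 1 ≤ ‖z‖ ^ n + c * ‖z‖ ^ k := by
  have hw : ‖(c : ℂ) * (starRingEnd ℂ) z ^ k‖ = c * ‖z‖ ^ k := by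
    rw [norm_mul, norm_pow, Complex.norm_conj, Complex.norm_real, Real.norm_of_nonneg hc]
  constructor
  · calc ‖z‖ ^ n = ‖1 - c * (starRingEnd ℂ) z ^ k‖ := by rw [← h, add_sub_cancel_right, norm_pow]
      _ ≤ ‖(1 : ℂ)‖ + ‖(c : ℂ) * (starRingEnd ℂ) z ^ k‖ := norm_sub_le _ _
      _ = 1 + c * ‖z‖ ^ k := by rw [norm_one, hw]
  · calc (1 : ℝ) = ‖z ^ n + c * (starRingEnd ℂ) z ^ k‖ := by rw [h, norm_one]
      _ ≤ ‖z ^ n‖ + ‖(c : ℂ) * (starRingEnd ℂ) z ^ k‖ := norm_add_le _ _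
      _ = ‖z‖ ^ n + c * ‖z‖ ^ k := by rw [norm_pow, hw]

theorem harmonic_trinomial_annulus_small_c_general
    (n k : ℕ) (hk1 : 1 ≤ k) (hkn : k ≤ n - 1)
    (c : ℝ) (hc0 : 0 < c) (hc1 : c < 1)
    (z : ℂ) (hz : z ^ n + (c : ℂ) * (starRingEnd ℂ) z ^ k - 1 = 0) :
    (1 - c) ^ (1 / ((n : ℝ) - k)) < ‖z‖ ∧
      ‖z‖ < (1 + c) ^ (1 / ((n : ℝ) - k)) := by
  obtain ⟨m, rfl⟩ : ∃ m, n = k + m := ⟨n - k, by omega⟩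
  have hk : k ≠ 0 := by omega
  have hm : (0 : ℝ) < m := by exact_mod_cast (show 0 < m by omega)
  obtain ⟨hupper, hlower⟩ :=
    norm_pow_bounds_of_pow_add_mul_conj_pow_eq_one hc0.le (sub_eq_zero.mp hz)
  have hexp : 1 / ((↑(k + m) : ℝ) - k) = (m : ℝ)⁻¹ := by push_cast; ring
  rw [hexp, Real.rpow_inv_lt_iff_of_pos (by linarith) (norm_nonneg z) hm,
    Real.lt_rpow_inv_iff_of_pos (norm_nonneg z) (by linarith) hm,
    Real.rpow_natCast]
  exact ⟨one_sub_lt_pow_of_one_le_pow_add_mul_pow (norm_nonneg z) hk hc0 hlower,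
    pow_lt_one_add_of_pow_add_le_one_add_mul_pow (norm_nonneg z) hk hc0 hupper⟩

/-- For `0 < c < 1`, every zero of `p_c(z) = z^n + c ẑ^k - 1` satisfies
`(1-c)^(1/(n-k)) < |z| < (1+c)^(1/(n-k))`. -/
theorem harmonic_trinomial_annulus_small_c
    (n k : ℕ) (hn : 3 ≤ n) (hk1 : 1 ≤ k) (hkn : k ≤ n - 1)
    (hgcd : Nat.gcd n k = 1)
    (c : ℝ) (hc0 : 0 < c) (hc1 : c < 1)
    (z : ℂ) (hz : z ^ n + (c : ℂ) * (starRingEnd ℂ) z ^ k - 1 = 0) :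
    (1 - c) ^ (1 / ((n : ℝ) - k)) < ‖z‖ ∧
      ‖z‖ < (1 + c) ^ (1 / ((n : ℝ) - k)) :=
  harmonic_trinomial_annulus_small_c_general n k hk1 hkn c hc0 hc1 z hz
end

section
/- Let p_c(z) = z^n + c\,\overline{z}^k - 1 where 0 < c < 1 is real, n \ge 3, 1 \le k \le n-1, and \gcd(n,k) = 1. Let \beta_1 be the positive real root of x^{n-k} + c - 1 = 0 (so \beta_1 = (1-c)^{1/(n-k)}) and \beta_2 the positive real root of x^{n-k} - c - 1 = 0 (so \beta_2 = (1+c)^{1/(n-k)}). Then every zero z of p_c satisfies \beta_1 < |z| < \beta_2. -/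
open Complex

/-- For `0 < c < 1`, every zero of `p_c(z) = z^n + c ẑ^k - 1` satisfies
`β₁ < |z| < β₂`, where `β₁ = (1-c)^(1/(n-k))` is the positive real root of
`x^(n-k) + c - 1 = 0` and `β₂ = (1+c)^(1/(n-k))` is the positive real root of
`x^(n-k) - c - 1 = 0`. -/
theorem harmonic_trinomial_annulus_beta
    (n k : ℕ) (hn : 3 ≤ n) (hk1 : 1 ≤ k) (hkn : k ≤ n - 1)
    (hgcd : Nat.gcd n k = 1)
    (c : ℝ) (hc0 : 0 < c) (hc1 : c < 1)
    (β₁ β₂ : ℝ) (hβ₁ : 0 < β₁) (hβ₂ : 0 < β₂)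
    (hβ₁root : β₁ ^ (n - k) + c - 1 = 0)
    (hβ₂root : β₂ ^ (n - k) - c - 1 = 0)
    (z : ℂ) (hz : z ^ n + (c : ℂ) * (starRingEnd ℂ) z ^ k - 1 = 0) :
    β₁ < ‖z‖ ∧ ‖z‖ < β₂ := by
  have hkln : k < n := by omega
  have hm : 0 < n - k := by omega
  have hadd : (n - k) + k = n := by omega
  set r := ‖z‖ with hr
  have hr0 : 0 ≤ r := norm_nonneg z
  have hb1m : β₁ ^ (n - k) = 1 - c := by linarith
  have hb2m : β₂ ^ (n - k) = 1 + c := by linarith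
  have hb1lt : β₁ < 1 := by
    by_contra h
    push_neg at h
    have : (1:ℝ) ≤ β₁ ^ (n - k) := one_le_pow₀ h
    linarith
  have hb2gt : 1 < β₂ := by
    by_contra h
    push_neg at h
    have : β₂ ^ (n - k) ≤ 1 := pow_le_one₀ hβ₂.le h
    linarith
  have hz1 : z ^ n + (c : ℂ) * (starRingEnd ℂ) z ^ k = 1 := by
    linear_combination hz
  have hz2 : z ^ n = 1 - (c : ℂ) * (starRingEnd ℂ) z ^ k := by
    linear_combination hz
  have habsc : ‖(c : ℂ) * (starRingEnd ℂ) z ^ k‖ = c * r ^ k := by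
    simp [norm_mul, norm_pow, Complex.norm_conj, Complex.norm_real, abs_of_pos hc0, hr]
  have h1 : (1:ℝ) ≤ r ^ n + c * r ^ k := by
    calc (1:ℝ) = ‖z ^ n + (c : ℂ) * (starRingEnd ℂ) z ^ k‖ := by
            rw [hz1]; simp
      _ ≤ ‖z ^ n‖ + ‖(c : ℂ) * (starRingEnd ℂ) z ^ k‖ :=
            norm_add_le _ _
      _ = r ^ n + c * r ^ k := by rw [habsc, norm_pow]
  have h2 : r ^ n ≤ 1 + c * r ^ k := by
    calc r ^ n = ‖1 - (c : ℂ) * (starRingEnd ℂ) z ^ k‖ := by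
            rw [← hz2, norm_pow]
      _ ≤ ‖(1:ℂ)‖ + ‖(c : ℂ) * (starRingEnd ℂ) z ^ k‖ :=
            norm_sub_le _ _
      _ = 1 + c * r ^ k := by rw [habsc]; simp
  constructor
  · by_contra h
    push_neg at h
    have hrk : r ^ k ≤ β₁ ^ k := pow_le_pow_left₀ hr0 h k
    have hrn : r ^ n ≤ β₁ ^ n := pow_le_pow_left₀ hr0 h n
    have hbn : β₁ ^ n = (1 - c) * β₁ ^ k := by
      rw [← hadd, pow_add, hb1m]
    have hbk : β₁ ^ k < 1 := pow_lt_one₀ hβ₁.le hb1lt (by omega)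
    nlinarith
  · by_contra h
    push_neg at h
    have hrm : (1 + c) ≤ r ^ (n - k) := by
      rw [← hb2m]; exact pow_le_pow_left₀ hβ₂.le h (n - k)
    have hrk : (1:ℝ) < r ^ k := one_lt_pow₀ (lt_of_lt_of_le hb2gt h) (by omega)
    have hrn : r ^ n = r ^ (n - k) * r ^ k := by rw [← pow_add, hadd]
    nlinarith
end
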